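/- arXiv:1208.6162 — 2 statements merged into one kernel-verified Lean document; each statement's English description precedes it below -/
import Mathlib

section
/- Let φ : B → A be a c.p.c. order zero map with supporting *-homomorphism π_φ, and let f ∈ C₀(0,1] be a positive contraction. Define f(φ)(b) := π_φ(b) f(φ(1_B)). If p ∈ B is a projection, then f(φ)(p) = f(φ(p)), where the right-hand side is continuous functional calculus applied to the positive contraction φ(p). -/
open Polynomial in
private lemma aux_pow {M : Type*} [Ring M] {q a : M} (hq2 : q * q = q)
    (hqa : q * a = a * q) : ∀ n : ℕ, q * a ^ (n + 1) = (q * a) ^ (n + 1) := by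
  intro n
  induction n with
  | zero => simp
  | succ n ih =>
    have hcomm : a ^ (n + 1) * q = q * a ^ (n + 1) :=
      (((show Commute q a from hqa).pow_right (n + 1)).symm).eq
    have hqq : (q * a ^ (n + 1)) * q = q * a ^ (n + 1) := by
      rw [mul_assoc, hcomm, ← mul_assoc, hq2]
    calc q * a ^ (n + 2) = (q * a ^ (n + 1)) * a := by rw [pow_succ, ← mul_assoc]
      _ = ((q * a ^ (n + 1)) * q) * a := by rw [hqq]
      _ = (q * a) ^ (n + 1) * (q * a) := by rw [ih, mul_assoc]
      _ = (q * a) ^ (n + 2) := (pow_succ _ _).symm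

open Polynomial in
private lemma aux_aeval {M : Type*} [Ring M] [Algebra ℝ M] {q a : M} (hq2 : q * q = q)
    (hqa : q * a = a * q) (P : ℝ[X]) (hP0 : P.coeff 0 = 0) :
    q * aeval a P = aeval (q * a) P := by
  have key : ∀ Q : ℝ[X], q * (a * aeval a Q) = (q * a) * aeval (q * a) Q := by
    intro Q
    induction Q using Polynomial.induction_on with
    | C c => simp [aeval_C, Algebra.algebraMap_eq_smul_one, mul_smul_comm, smul_mul_assoc]
    | add Q₁ Q₂ h₁ h₂ => simp only [map_add, mul_add, h₁, h₂]
    | monomial n c _ =>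
      simp only [map_mul, aeval_C, map_pow, aeval_X, Algebra.algebraMap_eq_smul_one,
        smul_mul_assoc, one_mul, mul_smul_comm]
      congr 1
      calc q * (a * a ^ (n + 1)) = q * a ^ (n + 2) := by rw [← pow_succ']
        _ = (q * a) ^ (n + 2) := aux_pow hq2 hqa (n + 1)
        _ = (q * a) * (q * a) ^ (n + 1) := pow_succ' _ _
  have hPX : X * P.divX = P := by
    have := P.X_mul_divX_add
    rwa [hP0, map_zero, add_zero] at this
  calc q * aeval a P = q * (a * aeval a P.divX) := by
        conv_lhs => rw [← hPX]
        rw [map_mul, aeval_X]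
    _ = (q * a) * aeval (q * a) P.divX := key P.divX
    _ = aeval (q * a) P := by
        conv_rhs => rw [← hPX]
        rw [map_mul, aeval_X]

/-- Let `φ : B → A` be a c.p.c. order zero map with supporting *-homomorphism `π`
(so `φ b = π b * φ 1 = φ 1 * π b`), and let `f ∈ C₀(0,1]` be a positive
contraction (`f` continuous, `f 0 = 0`, `0 ≤ f ≤ 1`).  The order zero functional
calculus is `f(φ)(b) = π b * f(φ 1)` (continuous functional calculus `cfc`).
If `p ∈ B` is a projection, then `f(φ)(p) = f(φ p)`. -/
theorem stmt9 {B M : Type*} [CStarAlgebra B] [CStarAlgebra M] [PartialOrder M] [StarOrderedRing M]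
    (φ : B →ₗ[ℂ] M) (π : B →⋆ₙₐ[ℂ] M)
    (hcontr : ∀ b, ‖φ b‖ ≤ ‖b‖) (hpos : 0 ≤ φ 1)
    (hstruct₁ : ∀ b, φ b = π b * φ 1)
    (hstruct₂ : ∀ b, φ b = φ 1 * π b)
    (f : ℝ → ℝ) (hfc : Continuous f) (hf0 : f 0 = 0)
    (hf : ∀ t, 0 ≤ f t ∧ f t ≤ 1)
    (p : B) (hp : p * p = p) (hpsa : star p = p) :
    π p * cfc f (φ 1) = cfc f (φ p) := by
  nontriviality M
  set a := φ 1 with ha_def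
  set q := π p with hq_def
  have hqa : q * a = a * q := by rw [← hstruct₁, ← hstruct₂]
  have hq2 : q * q = q := by rw [hq_def, ← map_mul, hp]
  have hφp : φ p = q * a := hstruct₁ p
  have hqsa : star q = q := by rw [hq_def, ← map_star, hpsa]
  have hsa : IsSelfAdjoint a := .of_nonneg hpos
  have hqasa : IsSelfAdjoint (q * a) := by
    rw [IsSelfAdjoint, star_mul, hqsa, hsa.star_eq, ← hqa]
  rw [hφp]
  rw [← sub_eq_zero, ← norm_eq_zero]
  by_contra hne
  have hDpos : 0 < ‖q * cfc f a - cfc f (q * a)‖ :=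
    lt_of_le_of_ne (norm_nonneg _) (Ne.symm hne)
  set D := ‖q * cfc f a - cfc f (q * a)‖ with hD
  obtain ⟨ε, hε, hεD⟩ : ∃ ε > 0, (‖q‖ + 1) * ε < D := by
    refine ⟨D / (2 * (‖q‖ + 1)), by positivity, ?_⟩
    have h1 : (‖q‖ + 1) * (D / (2 * (‖q‖ + 1))) = D / 2 := by
      field_simp
    rw [h1]
    linarith
  set R := max ‖a‖ ‖q * a‖ with hR
  have hR0 : (0:ℝ) ≤ R := le_max_iff.2 (Or.inl (norm_nonneg _))
  have hmem : ∀ b : M, ∀ x ∈ spectrum ℝ b, ‖b‖ ≤ R → x ∈ Set.Icc (-R) R := by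
    intro b x hx hbR
    have := spectrum.norm_le_norm_of_mem hx
    have habs : |x| ≤ R := le_trans (by simpa using this) hbR
    exact Set.mem_Icc.mpr (abs_le.mp habs)
  have h0mem : (0:ℝ) ∈ Set.Icc (-R) R := Set.mem_Icc.mpr ⟨by linarith, hR0⟩
  obtain ⟨P, hP⟩ := exists_polynomial_near_continuousMap (-R) R
    ((ContinuousMap.mk f hfc).restrict (Set.Icc (-R) R)) (ε/2) (by positivity)
  have hPpt : ∀ x ∈ Set.Icc (-R) R, |P.eval x - f x| < ε/2 := by
    intro x hx
    have hle := (P.toContinuousMapOn (Set.Icc (-R) R) -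
      (ContinuousMap.mk f hfc).restrict (Set.Icc (-R) R)).norm_coe_le_norm ⟨x, hx⟩
    have heq : ‖(P.toContinuousMapOn (Set.Icc (-R) R) -
        (ContinuousMap.mk f hfc).restrict (Set.Icc (-R) R)) ⟨x, hx⟩‖ = |P.eval x - f x| := by
      simp [Real.norm_eq_abs, Polynomial.toContinuousMapOn, Polynomial.toContinuousMap,
        ContinuousMap.restrict]
    rw [heq] at hle
    exact lt_of_le_of_lt hle hP
  set Q : Polynomial ℝ := P - Polynomial.C (P.eval 0) with hQdef
  have hQ0 : Q.coeff 0 = 0 := by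
    simp [hQdef, Polynomial.coeff_zero_eq_eval_zero]
  have hQpt : ∀ x ∈ Set.Icc (-R) R, |Q.eval x - f x| ≤ ε := by
    intro x hx
    have h1 := hPpt x hx
    have h2 := hPpt 0 h0mem
    rw [hf0, sub_zero] at h2
    have heval : Q.eval x - f x = (P.eval x - f x) - P.eval 0 := by
      simp [hQdef]; ring
    rw [heval]
    calc |(P.eval x - f x) - P.eval 0| ≤ |P.eval x - f x| + |P.eval 0| := abs_sub _ _
      _ ≤ ε := by linarith
  have hmid : q * cfc Q.eval a = cfc Q.eval (q * a) := by
    rw [cfc_polynomial Q a hsa, cfc_polynomial Q (q*a) hqasa, aux_aeval hq2 hqa Q hQ0]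
  have hb1 : ‖cfc f a - cfc Q.eval a‖ ≤ ε := by
    rw [← cfc_sub f Q.eval a]
    refine norm_cfc_le hε.le fun x hx => ?_
    have hxI := hmem a x hx (le_max_left _ _)
    simpa [Real.norm_eq_abs, abs_sub_comm] using hQpt x hxI
  have hb2 : ‖cfc Q.eval (q * a) - cfc f (q * a)‖ ≤ ε := by
    rw [← cfc_sub Q.eval f (q * a)]
    refine norm_cfc_le hε.le fun x hx => ?_
    have hxI := hmem (q * a) x hx (le_max_right _ _)
    simpa [Real.norm_eq_abs] using hQpt x hxI
  have hsplit : q * cfc f a - cfc f (q * a)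
      = q * (cfc f a - cfc Q.eval a) + (cfc Q.eval (q * a) - cfc f (q * a)) := by
    rw [mul_sub, hmid]; abel
  have hle : D ≤ (‖q‖ + 1) * ε := by
    rw [hD, hsplit]
    calc ‖q * (cfc f a - cfc Q.eval a) + (cfc Q.eval (q * a) - cfc f (q * a))‖
        ≤ ‖q * (cfc f a - cfc Q.eval a)‖ + ‖cfc Q.eval (q * a) - cfc f (q * a)‖ :=
          norm_add_le _ _
      _ ≤ ‖q‖ * ‖cfc f a - cfc Q.eval a‖ + ε := add_le_add (norm_mul_le _ _) hb2
      _ ≤ ‖q‖ * ε + ε :=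
          add_le_add (mul_le_mul_of_nonneg_left hb1 (norm_nonneg q)) le_rfl
      _ = (‖q‖ + 1) * ε := by ring
  linarith
end

section
/- In C₀((0,1], M_n), the elements x_j(t) = t^{1/2} e_{1j} (1 ≤ j ≤ n) satisfy ‖x_j‖ ≤ 1, x₁ ≥ 0, x_j x_j* = x₁², and (x_j* x_j)(x_i* x_i) = 0 for i ≠ j; moreover x_i* x_j is the function t ↦ t·e_{ij}, and these elements generate C₀((0,1], M_n) as a C*-algebra. -/
open Matrix
open scoped Matrix.Norms.L2Operator

/-- The cone `C₀((0,1], Mₙ)`, realized as the functions in `C([0,1], Mₙ)`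
vanishing at `0`, as a non-unital star subalgebra. -/
noncomputable def coneAlg (n : ℕ) :
    NonUnitalStarSubalgebra ℂ
      C(Set.Icc (0 : ℝ) 1, Matrix (Fin n) (Fin n) ℂ) where
  carrier := {f | f ⟨0, by norm_num⟩ = 0}
  add_mem' := by intro a b ha hb; simp_all [Set.mem_setOf_eq]
  zero_mem' := by simp [Set.mem_setOf_eq]
  mul_mem' := by intro a b ha hb; simp_all [Set.mem_setOf_eq]
  smul_mem' := by intro c a ha; simp_all [Set.mem_setOf_eq]
  star_mem' := by intro a ha; simp_all [Set.mem_setOf_eq]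

/-- The element `x_j : t ↦ t^{1/2} e_{1j}` of `C₀((0,1], Mₙ)`. -/
noncomputable def coneGen (n : ℕ) [NeZero n] (j : Fin n) :
    C(Set.Icc (0 : ℝ) 1, Matrix (Fin n) (Fin n) ℂ) :=
  ⟨fun t => Real.sqrt (t : ℝ) • single 0 j (1 : ℂ),
    ((Real.continuous_sqrt.comp continuous_subtype_val).smul continuous_const)⟩

namespace ConeAux

set_option linter.unusedSectionVars false

instance (n : ℕ) : NormedStarGroup (Matrix (Fin n) (Fin n) ℂ) :=
  CStarRing.to_normedStarGroup

variable {n : ℕ} [NeZero n]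

lemma sbm_star (i j : Fin n) : star (single i j (1:ℂ)) = single j i 1 := by
  ext a b
  simp [single, Matrix.conjTranspose_apply, and_comm]

lemma norm_sbm_le (i j : Fin n) : ‖single i j (1:ℂ)‖ ≤ 1 := by
  have hp : star (single j j (1:ℂ)) * single j j 1 = single j j 1 := by
    rw [sbm_star]
    simp [Matrix.single_mul_single_same]
  have h1 : ‖single j j (1:ℂ)‖ ≤ 1 := by
    have := CStarRing.norm_star_mul_self (x := single j j (1:ℂ))
    rw [hp] at this
    nlinarith [norm_nonneg (single j j (1:ℂ))]
  have h2 := CStarRing.norm_star_mul_self (x := single i j (1:ℂ))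
  rw [sbm_star, Matrix.single_mul_single_same, one_mul] at h2
  nlinarith [norm_nonneg (single i j (1:ℂ))]

lemma star_coneGen_apply (j : Fin n) (t : Set.Icc (0:ℝ) 1) :
    (star (coneGen n j)) t = Real.sqrt (t:ℝ) • single j 0 (1:ℂ) := by
  show star (Real.sqrt (t:ℝ) • single 0 j (1:ℂ)) = _
  rw [star_smul, star_trivial, sbm_star]

lemma key6 (i j : Fin n) (t : Set.Icc (0:ℝ) 1) :
    (star (coneGen n i) * coneGen n j) t = (t : ℝ) • single i j 1 := by
  rw [ContinuousMap.mul_apply, star_coneGen_apply]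
  show _ * (Real.sqrt (t:ℝ) • single 0 j (1:ℂ)) = _
  rw [smul_mul_smul_comm, Matrix.single_mul_single_same, one_mul,
    Real.mul_self_sqrt t.2.1]

/-- The monomial `t ↦ t^k • e_{ij}`. -/
noncomputable def monFn (n : ℕ) (k : ℕ) (i j : Fin n) :
    C(Set.Icc (0 : ℝ) 1, Matrix (Fin n) (Fin n) ℂ) :=
  ⟨fun t => ((t : ℝ) ^ k) • single i j (1 : ℂ),
    (((continuous_subtype_val).pow k).smul continuous_const)⟩

/-- `g ↦ (t ↦ g t • e_{ij})`. -/
noncomputable def smulE (n : ℕ) (g : C(Set.Icc (0:ℝ) 1, ℝ)) (i j : Fin n) :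
    C(Set.Icc (0 : ℝ) 1, Matrix (Fin n) (Fin n) ℂ) :=
  ⟨fun t => g t • single i j (1 : ℂ), (g.continuous.smul continuous_const)⟩

noncomputable def entryLM (n : ℕ) (i j : Fin n) :
    Matrix (Fin n) (Fin n) ℂ →ₗ[ℂ] ℂ where
  toFun M := M i j
  map_add' := by intros; simp
  map_smul' := by intros; simp

lemma entryCont (i j : Fin n) : Continuous (fun M : Matrix (Fin n) (Fin n) ℂ => M i j) :=
  (LinearMap.toContinuousLinearMap (entryLM n i j)).continuous

noncomputable def ΦCLM (n : ℕ) (i j : Fin n) :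
    C(Set.Icc (0:ℝ) 1, ℝ) →L[ℝ] C(Set.Icc (0:ℝ) 1, Matrix (Fin n) (Fin n) ℂ) :=
  (ContinuousLinearMap.toSpanSingleton ℝ (single i j (1:ℂ))).compLeftContinuous ℝ _

lemma ΦCLM_eq (g : C(Set.Icc (0:ℝ) 1, ℝ)) (i j : Fin n) :
    ΦCLM n i j g = smulE n g i j := by
  ext t
  simp [ΦCLM, smulE, ContinuousLinearMap.toSpanSingleton_apply, single, mul_ite]

noncomputable def LLL (n : ℕ) [NeZero n] :=
  (NonUnitalStarAlgebra.adjoin ℂ (Set.range (coneGen n))).topologicalClosure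

lemma monFn_one_eq (i j : Fin n) : monFn n 1 i j = star (coneGen n i) * coneGen n j := by
  ext1 t
  rw [key6]
  show ((t:ℝ)^1) • single i j (1:ℂ) = _
  rw [pow_one]

lemma monFn_succ (k : ℕ) (i j : Fin n) :
    monFn n (k+1) i j = monFn n 1 i i * monFn n k i j := by
  ext1 t
  rw [ContinuousMap.mul_apply]
  show ((t:ℝ)^(k+1)) • single i j (1:ℂ)
      = (((t:ℝ)^1) • single i i (1:ℂ)) * (((t:ℝ)^k) • single i j (1:ℂ))
  rw [smul_mul_smul_comm, Matrix.single_mul_single_same, one_mul, ← pow_add]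
  ring_nf

lemma monFn_mem (k : ℕ) (hk : k ≠ 0) (i j : Fin n) :
    monFn n k i j ∈ NonUnitalStarAlgebra.adjoin ℂ (Set.range (coneGen n)) := by
  induction k with
  | zero => exact absurd rfl hk
  | succ m ih =>
    have h1 : ∀ a b : Fin n, monFn n 1 a b ∈
        NonUnitalStarAlgebra.adjoin ℂ (Set.range (coneGen n)) := by
      intro a b
      rw [monFn_one_eq]
      exact mul_mem (star_mem (NonUnitalStarAlgebra.subset_adjoin ℂ _ ⟨a, rfl⟩))
        (NonUnitalStarAlgebra.subset_adjoin ℂ _ ⟨b, rfl⟩)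
    rcases Nat.eq_zero_or_pos m with hm | hm
    · subst hm; exact h1 i j
    · rw [monFn_succ]
      exact mul_mem (h1 i i) (ih hm.ne')

lemma smulE_mem (g : C(Set.Icc (0:ℝ) 1, ℝ)) (hg : g ⟨0, by norm_num⟩ = 0) (i j : Fin n) :
    smulE n g i j ∈ LLL n := by
  set z0 : Set.Icc (0:ℝ) 1 := ⟨0, by norm_num⟩ with hz0
  have hB : Continuous fun h : C(Set.Icc (0:ℝ) 1, ℝ) =>
      h - ContinuousMap.const _ (h z0) :=
    continuous_id.sub (ContinuousMap.continuous_const'.comp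
      (continuous_eval_const z0))
  have hF : Continuous fun h : C(Set.Icc (0:ℝ) 1, ℝ) =>
      ΦCLM n i j (h - ContinuousMap.const _ (h z0)) :=
    (ΦCLM n i j).continuous.comp hB
  have hclosed : IsClosed {h : C(Set.Icc (0:ℝ) 1, ℝ) |
      ΦCLM n i j (h - ContinuousMap.const _ (h z0)) ∈ LLL n} :=
    (NonUnitalStarSubalgebra.isClosed_topologicalClosure _).preimage hF
  have hpoly : ∀ h ∈ polynomialFunctions (Set.Icc (0:ℝ) 1),
      ΦCLM n i j (h - ContinuousMap.const _ (h z0)) ∈ LLL n := by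
    have poly_mem : ∀ p : Polynomial ℝ,
        ΦCLM n i j ((p.toContinuousMapOn (Set.Icc (0:ℝ) 1))
          - ContinuousMap.const _ ((p.toContinuousMapOn (Set.Icc (0:ℝ) 1)) z0)) ∈ LLL n := by
      intro p
      induction p using Polynomial.induction_on' with
      | add p q hp hq =>
        have hadd : (p + q).toContinuousMapOn (Set.Icc (0:ℝ) 1)
            = p.toContinuousMapOn (Set.Icc (0:ℝ) 1) + q.toContinuousMapOn (Set.Icc (0:ℝ) 1) := by
          ext t; simp [Polynomial.toContinuousMapOn_apply, Polynomial.toContinuousMap_apply]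
        rw [hadd, show ∀ a b : C(Set.Icc (0:ℝ) 1, ℝ),
            (a + b) - ContinuousMap.const _ ((a + b) z0)
              = (a - ContinuousMap.const _ (a z0)) + (b - ContinuousMap.const _ (b z0)) by
          intro a b; ext t; simp; ring, map_add]
        exact add_mem hp hq
      | monomial m a =>
        by_cases hm : m = 0
        · subst hm
          have h0 : ((Polynomial.monomial 0 a).toContinuousMapOn (Set.Icc (0:ℝ) 1))
              - ContinuousMap.const _
                (((Polynomial.monomial 0 a).toContinuousMapOn (Set.Icc (0:ℝ) 1)) z0) = 0 := by
            ext t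
            simp [Polynomial.toContinuousMapOn_apply, Polynomial.toContinuousMap_apply]
          rw [h0, map_zero]
          exact zero_mem (LLL n)
        · have hsm : (a:ℂ) • (single i j (1:ℂ)) = a • single i j (1:ℂ) := by
            rw [← Complex.coe_algebraMap]; exact algebraMap_smul ℂ a _
          have heq : ΦCLM n i j
              (((Polynomial.monomial m a).toContinuousMapOn (Set.Icc (0:ℝ) 1))
                - ContinuousMap.const _
                  (((Polynomial.monomial m a).toContinuousMapOn (Set.Icc (0:ℝ) 1)) z0))
              = (a:ℂ) • monFn n m i j := by
            rw [ΦCLM_eq]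
            ext1 t
            show (((Polynomial.monomial m a).toContinuousMapOn (Set.Icc (0:ℝ) 1)) t
                - ((Polynomial.monomial m a).toContinuousMapOn (Set.Icc (0:ℝ) 1)) z0)
                • single i j (1:ℂ) = ((a:ℂ) • monFn n m i j) t
            have hz : ((z0 : Set.Icc (0:ℝ) 1) : ℝ) = 0 := rfl
            rw [Polynomial.toContinuousMapOn_apply, Polynomial.toContinuousMapOn_apply,
              Polynomial.toContinuousMap_apply, Polynomial.toContinuousMap_apply, hz,
              Polynomial.eval_monomial, Polynomial.eval_monomial, zero_pow hm, mul_zero, sub_zero]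
            show _ = (a:ℂ) • (((t:ℝ)^m) • single i j (1:ℂ))
            rw [mul_smul, smul_comm, ← hsm]
            exact smul_comm _ _ _
          rw [heq]
          exact SMulMemClass.smul_mem _
            ((NonUnitalStarSubalgebra.le_topologicalClosure _) (monFn_mem m hm i j))
    rintro h ⟨p, -, rfl⟩
    exact poly_mem p
  have huniv : ∀ h : C(Set.Icc (0:ℝ) 1, ℝ),
      ΦCLM n i j (h - ContinuousMap.const _ (h z0)) ∈ LLL n := by
    intro h
    have htop := polynomialFunctions_closure_eq_top (0:ℝ) 1
    have hmem : h ∈ (polynomialFunctions (Set.Icc (0:ℝ) 1)).topologicalClosure := by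
      rw [htop]; trivial
    have hsub : (polynomialFunctions (Set.Icc (0:ℝ) 1) : Set C(Set.Icc (0:ℝ) 1, ℝ))
        ⊆ {h | ΦCLM n i j (h - ContinuousMap.const _ (h z0)) ∈ LLL n} := hpoly
    exact closure_minimal hsub hclosed hmem
  have hg' := huniv g
  rwa [hg, show ContinuousMap.const _ (0:ℝ) = 0 from rfl, sub_zero, ΦCLM_eq] at hg'

end ConeAux

open ConeAux in
/-- In `C₀((0,1], Mₙ)`, the elements `x_j : t ↦ t^{1/2} e_{1j}` satisfy
`‖x_j‖ ≤ 1`, `x₁ ≥ 0`, `x_j x_j* = x₁²`, `(x_j* x_j)(x_i* x_i) = 0` for `i ≠ j`;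
moreover `x_i* x_j` is the function `t ↦ t e_{ij}`, and the `x_j` generate
`C₀((0,1], Mₙ)` as a C*-algebra. -/
theorem stmt12 (n : ℕ) [NeZero n] :
    (∀ j, coneGen n j ∈ coneAlg n) ∧
    (∀ j, ‖coneGen n j‖ ≤ 1) ∧
    (∃ c, coneGen n 0 = star c * c) ∧
    (∀ j, coneGen n j * star (coneGen n j) = coneGen n 0 * coneGen n 0) ∧
    (∀ i j : Fin n, i ≠ j →
      (star (coneGen n j) * coneGen n j) * (star (coneGen n i) * coneGen n i)
        = 0) ∧
    (∀ (i j : Fin n) (t : Set.Icc (0 : ℝ) 1),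
      (star (coneGen n i) * coneGen n j) t = (t : ℝ) • single i j 1) ∧
    closure
        (NonUnitalStarAlgebra.adjoin ℂ (Set.range (coneGen n)) :
          Set C(Set.Icc (0 : ℝ) 1, Matrix (Fin n) (Fin n) ℂ))
      = (coneAlg n : Set C(Set.Icc (0 : ℝ) 1, Matrix (Fin n) (Fin n) ℂ)) := by
  have hmem : ∀ j, coneGen n j ∈ coneAlg n := by
    intro j
    show coneGen n j ⟨0, by norm_num⟩ = 0
    show Real.sqrt ((0:ℝ)) • single 0 j (1:ℂ) = 0
    rw [Real.sqrt_zero, zero_smul]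
  refine ⟨hmem, ?_, ?_, ?_, ?_, key6, ?_⟩
  · -- norms
    intro j
    rw [ContinuousMap.norm_le _ zero_le_one]
    intro t
    show ‖Real.sqrt (t:ℝ) • single (0:Fin n) j (1:ℂ)‖ ≤ 1
    rw [norm_smul, Real.norm_eq_abs, abs_of_nonneg (Real.sqrt_nonneg _)]
    have hs1 : Real.sqrt (t:ℝ) ≤ 1 := Real.sqrt_le_one.mpr t.2.2
    exact mul_le_one₀ hs1 (norm_nonneg _) (norm_sbm_le 0 j)
  · -- positivity
    refine ⟨⟨fun t => Real.sqrt (Real.sqrt (t : ℝ)) • single 0 0 (1 : ℂ),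
      (((Real.continuous_sqrt.comp Real.continuous_sqrt).comp
        continuous_subtype_val).smul continuous_const)⟩, ?_⟩
    ext1 t
    rw [ContinuousMap.mul_apply]
    show Real.sqrt (t:ℝ) • single (0:Fin n) 0 (1:ℂ)
        = star (Real.sqrt (Real.sqrt (t:ℝ)) • single (0:Fin n) 0 (1:ℂ))
          * (Real.sqrt (Real.sqrt (t:ℝ)) • single (0:Fin n) 0 (1:ℂ))
    rw [star_smul, star_trivial, sbm_star, smul_mul_smul_comm,
      Matrix.single_mul_single_same, one_mul, Real.mul_self_sqrt (Real.sqrt_nonneg _)]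
  · -- x_j x_j* = x_0^2
    intro j
    ext1 t
    rw [ContinuousMap.mul_apply, ContinuousMap.mul_apply, star_coneGen_apply]
    show (Real.sqrt (t:ℝ) • single (0:Fin n) j (1:ℂ))
          * (Real.sqrt (t:ℝ) • single j 0 1)
        = (Real.sqrt (t:ℝ) • single (0:Fin n) 0 (1:ℂ))
          * (Real.sqrt (t:ℝ) • single 0 0 1)
    rw [smul_mul_smul_comm, smul_mul_smul_comm, Matrix.single_mul_single_same,
      Matrix.single_mul_single_same]
  · -- orthogonality
    intro i j hij
    ext1 t
    rw [ContinuousMap.mul_apply, key6, key6, ContinuousMap.zero_apply,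
      smul_mul_smul_comm, Matrix.single_mul_single_of_ne (c := (1:ℂ)) j j i hij.symm (1:ℂ), smul_zero]
  · -- generation
    apply Set.Subset.antisymm
    · apply closure_minimal _ _
      · intro x hx
        exact NonUnitalStarAlgebra.adjoin_le
          (by rintro y ⟨j, rfl⟩; exact hmem j) hx
      · have : (coneAlg n : Set C(Set.Icc (0 : ℝ) 1, Matrix (Fin n) (Fin n) ℂ))
            = (fun f : C(Set.Icc (0 : ℝ) 1, Matrix (Fin n) (Fin n) ℂ) =>
                f ⟨0, by norm_num⟩) ⁻¹' {0} := rfl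
        rw [this]
        exact isClosed_singleton.preimage (continuous_eval_const _)
    · intro f hf
      have hf0 : f ⟨0, by norm_num⟩ = 0 := hf
      show f ∈ (LLL n : Set _)
      set z0 : Set.Icc (0:ℝ) 1 := ⟨0, by norm_num⟩ with hz0
      -- real and imaginary parts of the matrix entries of f
      set gRe : Fin n → Fin n → C(Set.Icc (0:ℝ) 1, ℝ) := fun i j =>
        ⟨fun t => (f t i j).re,
          Complex.continuous_re.comp ((entryCont i j).comp f.continuous)⟩ with hgRe
      set gIm : Fin n → Fin n → C(Set.Icc (0:ℝ) 1, ℝ) := fun i j =>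
        ⟨fun t => (f t i j).im,
          Complex.continuous_im.comp ((entryCont i j).comp f.continuous)⟩ with hgIm
      have hRe0 : ∀ i j, gRe i j z0 = 0 := by
        intro i j; show (f z0 i j).re = 0; rw [hf0]; simp
      have hIm0 : ∀ i j, gIm i j z0 = 0 := by
        intro i j; show (f z0 i j).im = 0; rw [hf0]; simp
      have hsum : f = ∑ i : Fin n, ∑ j : Fin n,
          (smulE n (gRe i j) i j + Complex.I • smulE n (gIm i j) i j) := by
        ext1 t
        have hterm : ∀ i j : Fin n,
            (smulE n (gRe i j) i j + Complex.I • smulE n (gIm i j) i j) t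
              = single i j (f t i j) := by
          intro i j
          show ((f t i j).re) • single i j (1:ℂ)
              + Complex.I • (((f t i j).im) • single i j (1:ℂ))
              = single i j (f t i j)
          rw [smul_single, smul_single, smul_single,
            ← Matrix.single_add]
          have hval : ((f t i j).re) • (1:ℂ) + Complex.I • (((f t i j).im) • (1:ℂ))
              = f t i j := by
            simp only [smul_eq_mul, Complex.real_smul, mul_one]
            rw [mul_comm]
            exact Complex.re_add_im _
          rw [hval]
        simp only [ContinuousMap.sum_apply]
        simp only [hterm]
        exact matrix_eq_sum_single (f t)
      rw [hsum]
      apply sum_mem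
      intro i _
      apply sum_mem
      intro j _
      exact add_mem (smulE_mem (gRe i j) (hRe0 i j) i j)
        (SMulMemClass.smul_mem _ (smulE_mem (gIm i j) (hIm0 i j) i j))
end
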